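/- Let V(y₁,y₂) = C₃ y₁³ + (λ₂/2) y₂² with C₃ ≠ 0 and λ₂ ≠ 0. Then the origin is not a saddle of V: for every sufficiently small ε > 0, the set {y ∈ B_ε(0) : V(y) < 0} is path-connected, or the set ({y ∈ B_ε(0) : V(y) < 0} ∪ {0}) fails the saddle conditions. -/

import Mathlib

/-!
Every point of `{V < 0}` is joined to `0` inside `{V ≤ 0}`, so the communication height to the
origin is `0` and the open valley of the origin is all of `{V < 0}`. That set meets every square
`ball 0 ε` (sup norm) in a path-connected set: an axis-parallel segment keeps one summand of `V`
fixed and moves the other monotonically, so `V` stays below its larger endpoint value. Along two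
such segments through a corner, every point reaches a base point `(a, 0)` with `C₃ a³ < 0`.
-/

open Metric Set

/-- Communication height between `x` and `y` in the plane. -/
noncomputable def commHeight (V : ℝ × ℝ → ℝ) (x y : ℝ × ℝ) : ℝ :=
  sInf {c : ℝ | ∃ γ : Path x y, ∀ t, V (γ t) ≤ c}

/-- The open valley of `z`. -/
def openValley (V : ℝ × ℝ → ℝ) (z : ℝ × ℝ) : Set (ℝ × ℝ) :=
  {y | commHeight V y z = V z ∧ V y < V z}

/-- `z` is a saddle of `V` in the valley sense. -/
def IsSaddle (V : ℝ × ℝ → ℝ) (z : ℝ × ℝ) : Prop :=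
  ∃ ε > 0, (openValley V z ∩ ball z ε).Nonempty ∧
    ¬ IsPathConnected (openValley V z ∩ ball z ε) ∧
    IsPathConnected ((openValley V z ∪ {z}) ∩ ball z ε)

section Valley

variable {V : ℝ × ℝ → ℝ} {y z : ℝ × ℝ}

theorem commHeight_eq_of_joinedIn (h : JoinedIn {w | V w ≤ V z} y z) :
    commHeight V y z = V z := by
  obtain ⟨γ, hγ⟩ := h
  refine IsLeast.csInf_eq ⟨⟨γ, hγ⟩, ?_⟩
  rintro c ⟨γ', hγ'⟩
  simpa using hγ' 1

theorem openValley_eq_of_forall_joinedIn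
    (h : ∀ y, V y < V z → JoinedIn {w | V w ≤ V z} y z) :
    openValley V z = {y | V y < V z} :=
  Set.ext fun y => ⟨And.right, fun hy => ⟨commHeight_eq_of_joinedIn (h y hy), hy⟩⟩

end Valley

section Segments

variable {E F : Type*} [AddCommGroup E] [Module ℝ E] [TopologicalSpace E] [ContinuousAdd E]
  [ContinuousSMul ℝ E] [AddCommGroup F] [Module ℝ F] [TopologicalSpace F] [ContinuousAdd F]
  [ContinuousSMul ℝ F]

theorem joinedIn_sublevel_of_le_max {V : E → ℝ} {K : Set E} {c : ℝ} {x y : E}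
    (hK : Convex ℝ K) (hx : x ∈ {w | V w < c} ∩ K) (hy : y ∈ {w | V w < c} ∩ K)
    (hV : ∀ w ∈ segment ℝ x y, V w ≤ max (V x) (V y)) :
    JoinedIn ({w | V w < c} ∩ K) x y :=
  .of_segment_subset fun w hw =>
    ⟨(hV w hw).trans_lt (max_lt hx.1 hy.1), hK.segment_subset hx.2 hy.2 hw⟩

variable {V : E × F → ℝ} {K : Set (E × F)} {c : ℝ}

theorem joinedIn_sublevel_mk_left {u v : E} {s : F} (hK : Convex ℝ K)
    (hu : (u, s) ∈ {w | V w < c} ∩ K) (hv : (v, s) ∈ {w | V w < c} ∩ K)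
    (hV : ∀ r ∈ segment ℝ u v, V (r, s) ≤ max (V (u, s)) (V (v, s))) :
    JoinedIn ({w | V w < c} ∩ K) (u, s) (v, s) :=
  joinedIn_sublevel_of_le_max hK hu hv <| by
    rw [← Prod.image_mk_segment_left]
    rintro _ ⟨r, hr, rfl⟩
    exact hV r hr

theorem joinedIn_sublevel_mk_right {x : E} {s t : F} (hK : Convex ℝ K)
    (hs : (x, s) ∈ {w | V w < c} ∩ K) (ht : (x, t) ∈ {w | V w < c} ∩ K)
    (hV : ∀ r ∈ segment ℝ s t, V (x, r) ≤ max (V (x, s)) (V (x, t))) :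
    JoinedIn ({w | V w < c} ∩ K) (x, s) (x, t) :=
  joinedIn_sublevel_of_le_max hK hs ht <| by
    rw [← Prod.image_mk_segment_right]
    rintro _ ⟨r, hr, rfl⟩
    exact hV r hr

end Segments

theorem mk_mem_ball_zero_iff {p q ε : ℝ} :
    (p, q) ∈ ball (0 : ℝ × ℝ) ε ↔ |p| < ε ∧ |q| < ε := by
  simp [Prod.norm_def]

theorem exists_abs_lt_mul_pow_three_neg {C ε : ℝ} (hC : C ≠ 0) (hε : 0 < ε) :
    ∃ a : ℝ, |a| < ε ∧ C * a ^ 3 < 0 := by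
  rcases hC.lt_or_gt with hC | hC
  · exact ⟨ε / 2, by rw [abs_of_pos (half_pos hε)]; linarith,
      mul_neg_of_neg_of_pos hC (by positivity)⟩
  · refine ⟨-(ε / 2), by rw [abs_neg, abs_of_pos (half_pos hε)]; linarith,
      mul_neg_of_pos_of_neg hC ?_⟩
    rw [Odd.neg_pow (by decide)]
    exact neg_neg_of_pos (by positivity)

theorem mul_pow_three_le_max_of_mem_segment (C : ℝ) {u v r : ℝ} (hr : r ∈ segment ℝ u v) :
    C * r ^ 3 ≤ max (C * u ^ 3) (C * v ^ 3) := by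
  have hmono : Monotone fun x : ℝ => x ^ 3 := (Odd.strictMono_pow (by decide)).monotone
  have hq : QuasiconvexOn ℝ univ fun x : ℝ => C * x ^ 3 := by
    rcases le_total 0 C with hC | hC
    · exact (hmono.const_mul hC).quasiconvexOn
    · exact (hmono.const_mul_of_nonpos hC).quasiconvexOn
  exact ((hq _).segment_subset ⟨mem_univ u, le_max_left _ _⟩
    ⟨mem_univ v, le_max_right _ _⟩ hr).2

theorem mul_sq_le_max_of_mem_segment_zero (b : ℝ) {s r : ℝ} (hr : r ∈ segment ℝ s 0) :
    b * r ^ 2 ≤ max (b * s ^ 2) (b * 0 ^ 2) := by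
  obtain ⟨t, t', ht, ht', htt', rfl⟩ := hr
  have ht1 : t ≤ 1 := by linarith
  have hsq : t ^ 2 ≤ 1 := pow_le_one₀ ht ht1
  simp only [smul_eq_mul, mul_zero, add_zero]
  rcases le_total 0 (b * s ^ 2) with h | h
  · exact le_max_of_le_left (by nlinarith)
  · exact le_max_of_le_right (by nlinarith [sq_nonneg t])

noncomputable def cubicQuadratic (C lam : ℝ) (y : ℝ × ℝ) : ℝ :=
  C * y.1 ^ 3 + lam / 2 * y.2 ^ 2

namespace cubicQuadratic

variable {C lam : ℝ}

@[simp]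
theorem apply_zero : cubicQuadratic C lam 0 = 0 := by
  simp [cubicQuadratic]

theorem le_max_of_mem_segment_fst {u v r s : ℝ} (hr : r ∈ segment ℝ u v) :
    cubicQuadratic C lam (r, s) ≤
      max (cubicQuadratic C lam (u, s)) (cubicQuadratic C lam (v, s)) := by
  simp only [cubicQuadratic, max_add_add_right]
  exact add_le_add_left (mul_pow_three_le_max_of_mem_segment C hr) _

theorem le_max_of_mem_segment_snd {x s r : ℝ} (hr : r ∈ segment ℝ s 0) :
    cubicQuadratic C lam (x, r) ≤
      max (cubicQuadratic C lam (x, s)) (cubicQuadratic C lam (x, 0)) := by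
  simp only [cubicQuadratic, max_add_add_left]
  exact add_le_add_right (mul_sq_le_max_of_mem_segment_zero _ hr) _

theorem isPathConnected_neg_inter_ball (hC : C ≠ 0) {ε : ℝ} (hε : 0 < ε) :
    IsPathConnected ({y | cubicQuadratic C lam y < 0} ∩ ball 0 ε) := by
  obtain ⟨a, ha, hCa⟩ := exists_abs_lt_mul_pow_three_neg hC hε
  have hε' : |(0 : ℝ)| < ε := by simpa using hε
  have hbase : (a, (0 : ℝ)) ∈ {y | cubicQuadratic C lam y < 0} ∩ ball 0 ε :=
    ⟨by simpa [cubicQuadratic] using hCa, mk_mem_ball_zero_iff.2 ⟨ha, hε'⟩⟩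
  refine ⟨(a, 0), hbase, fun y hy => ?_⟩
  obtain ⟨y₁, y₂⟩ := y
  obtain ⟨hVy, hy₁, hy₂⟩ : C * y₁ ^ 3 + lam / 2 * y₂ ^ 2 < 0 ∧ |y₁| < ε ∧ |y₂| < ε :=
    ⟨hy.1, mk_mem_ball_zero_iff.1 hy.2⟩
  refine JoinedIn.symm ?_
  rcases le_or_gt lam 0 with hlam | hlam
  · have hcorner : (a, y₂) ∈ {y | cubicQuadratic C lam y < 0} ∩ ball 0 ε :=
      ⟨(by nlinarith [sq_nonneg y₂] : C * a ^ 3 + lam / 2 * y₂ ^ 2 < 0),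
        mk_mem_ball_zero_iff.2 ⟨ha, hy₂⟩⟩
    exact (joinedIn_sublevel_mk_left (convex_ball _ _) hy hcorner
      fun _ => le_max_of_mem_segment_fst).trans
      (joinedIn_sublevel_mk_right (convex_ball _ _) hcorner hbase
        fun _ => le_max_of_mem_segment_snd)
  · have hcorner : (y₁, 0) ∈ {y | cubicQuadratic C lam y < 0} ∩ ball 0 ε :=
      ⟨(by nlinarith [sq_nonneg y₂] : C * y₁ ^ 3 + lam / 2 * 0 ^ 2 < 0),
        mk_mem_ball_zero_iff.2 ⟨hy₁, hε'⟩⟩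
    exact (joinedIn_sublevel_mk_right (convex_ball _ _) hy hcorner
      fun _ => le_max_of_mem_segment_snd).trans
      (joinedIn_sublevel_mk_left (convex_ball _ _) hcorner hbase
        fun _ => le_max_of_mem_segment_fst)

theorem joinedIn_nonpos_zero (hC : C ≠ 0) {y : ℝ × ℝ} (hy : cubicQuadratic C lam y < 0) :
    JoinedIn {w | cubicQuadratic C lam w ≤ 0} y 0 := by
  have hε : 0 < ‖y‖ + 1 := by positivity
  obtain ⟨a, ha, hCa⟩ := exists_abs_lt_mul_pow_three_neg hC hε
  have hbase : (a, (0 : ℝ)) ∈ {w | cubicQuadratic C lam w < 0} ∩ ball 0 (‖y‖ + 1) :=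
    ⟨by simpa [cubicQuadratic] using hCa, mk_mem_ball_zero_iff.2 ⟨ha, by simpa using hε⟩⟩
  have hy' : y ∈ {w | cubicQuadratic C lam w < 0} ∩ ball 0 (‖y‖ + 1) :=
    ⟨hy, mem_ball_zero_iff.2 (lt_add_one _)⟩
  have hto_base : JoinedIn {w | cubicQuadratic C lam w ≤ 0} y (a, 0) :=
    ((isPathConnected_neg_inter_ball hC hε).joinedIn _ hy' _ hbase).mono
      fun _ hw => mem_ofPred_eq ▸ le_of_lt hw.1
  have hto_zero : JoinedIn {w | cubicQuadratic C lam w ≤ 0} (a, 0) ((0 : ℝ), (0 : ℝ)) :=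
    .of_segment_subset <| by
      rw [← Prod.image_mk_segment_left]
      rintro _ ⟨r, hr, rfl⟩
      refine (le_max_of_mem_segment_fst hr).trans (max_le ?_ ?_) <;>
        simp [cubicQuadratic, hCa.le]
  exact hto_base.trans hto_zero

end cubicQuadratic

theorem cubic_origin_not_saddle_general (C3 lam2 : ℝ) (hC : C3 ≠ 0) :
    ¬ IsSaddle (fun y : ℝ × ℝ => C3 * y.1 ^ 3 + (lam2 / 2) * y.2 ^ 2) (0 : ℝ × ℝ) := by
  change ¬ IsSaddle (cubicQuadratic C3 lam2) 0
  rintro ⟨ε, hε, -, hnot, -⟩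
  have hvalley : openValley (cubicQuadratic C3 lam2) 0 = {y | cubicQuadratic C3 lam2 y < 0} := by
    rw [openValley_eq_of_forall_joinedIn, cubicQuadratic.apply_zero]
    simpa only [cubicQuadratic.apply_zero] using fun y hy =>
      cubicQuadratic.joinedIn_nonpos_zero hC hy
  exact hnot (hvalley ▸ cubicQuadratic.isPathConnected_neg_inter_ball hC hε)

/-- For `V(y₁,y₂) = C₃ y₁³ + (λ₂/2) y₂²` with `C₃ ≠ 0` and `λ₂ ≠ 0`, the origin is not a
saddle of `V` in the valley sense. -/
theorem cubic_origin_not_saddle (C3 lam2 : ℝ) (hC : C3 ≠ 0) (hlam : lam2 ≠ 0) :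
    ¬ IsSaddle (fun y : ℝ × ℝ => C3 * y.1 ^ 3 + (lam2 / 2) * y.2 ^ 2) (0 : ℝ × ℝ) :=
  cubic_origin_not_saddle_general C3 lam2 hC
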